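/- arXiv:2507.09283 — 2 statements merged into one kernel-verified Lean document; each statement's English description precedes it below -/
import Mathlib

section
/- The set S3 = L ∪ {(x−1, y) : (x,y) ∈ L}, where L = {(x,y) ∈ ℤ×ℤ : x ≡ y (mod 4) and x + 3y ≡ 0 (mod 8)}, is strongly optimal for the infinite hexagonal grid T3: for every vertex v of T3, exactly one vertex of the closed neighborhood N[v] belongs to S3. Consequently the closed neighborhoods N[s], s ∈ S3, partition the vertex set of T3. -/
/-- The infinite hexagonal grid: vertices `ℤ × ℤ`; `(x,y)` is adjacent to `(x,y+1)` and
`(x,y−1)`, and additionally to `(x+1,y)` when `x+y` is even (equivalently, to `(x−1,y)` when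
`x+y` is odd). -/
def T3 : SimpleGraph (ℤ × ℤ) where
  Adj p q :=
    (p.1 = q.1 ∧ (q.2 = p.2 + 1 ∨ p.2 = q.2 + 1)) ∨
    (p.2 = q.2 ∧ ((Even (p.1 + p.2) ∧ q.1 = p.1 + 1) ∨ (Even (q.1 + q.2) ∧ p.1 = q.1 + 1)))
  symm := by
    constructor
    rintro p q (⟨h1, h2 | h2⟩ | ⟨h1, h2 | h2⟩)
    · exact Or.inl ⟨h1.symm, Or.inr h2⟩
    · exact Or.inl ⟨h1.symm, Or.inl h2⟩
    · exact Or.inr ⟨h1.symm, Or.inr h2⟩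
    · exact Or.inr ⟨h1.symm, Or.inl h2⟩
  loopless := by
    constructor
    rintro p (⟨h1, h2 | h2⟩ | ⟨h1, ⟨_, h2⟩ | ⟨_, h2⟩⟩) <;> omega

/-- The lattice `L = {(x,y) : x ≡ y (mod 4), x + 3y ≡ 0 (mod 8)}` (generated by `(2,2)` and
`(3,−1)`). -/
def L : Set (ℤ × ℤ) := {p | Int.ModEq 4 p.1 p.2 ∧ Int.ModEq 8 (p.1 + 3 * p.2) 0}

/-- `S3 = L ∪ {(x−1, y) : (x,y) ∈ L}`. -/
def S3 : Set (ℤ × ℤ) := L ∪ (fun p : ℤ × ℤ => (p.1 - 1, p.2)) '' L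


/-- The closed neighborhood `N[v]` in `T3`. -/
def closedNbhdT3 (v : ℤ × ℤ) : Set (ℤ × ℤ) := insert v (T3.neighborSet v)

/-! With `c(x, y) = x + 3y mod 8`, `L` is the kernel of `c` (the congruence mod 8 forces the
one mod 4) and `S3 = c⁻¹{0, 7}`. As `x + 3y ≡ x + y (mod 2)`, the closed neighbourhood of a
vertex with `c = k` carries the values `k, k ± 3` and `k + 1` (`k` even) or `k − 1` (`k` odd):
four distinct residues, exactly one of which is `0` or `7`. -/

namespace SimpleGraph

variable {V : Type*} (G : SimpleGraph V)

def closedNbhd (v : V) : Set V := insert v (G.neighborSet v)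

variable {G}

theorem mem_closedNbhd_comm {u v : V} : u ∈ G.closedNbhd v ↔ v ∈ G.closedNbhd u := by
  simp only [closedNbhd, Set.mem_insert_iff, mem_neighborSet, eq_comm (a := u), G.adj_comm]

theorem iUnion_closedNbhd_eq_univ_and_pairwiseDisjoint {S : Set V}
    (h : ∀ v, ∃! u, u ∈ S ∧ u ∈ G.closedNbhd v) :
    (⋃ s ∈ S, G.closedNbhd s) = Set.univ ∧ S.PairwiseDisjoint G.closedNbhd := by
  refine ⟨Set.eq_univ_of_forall fun v => ?_, fun s hs t ht hst => ?_⟩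
  · obtain ⟨u, ⟨hu, hvu⟩, -⟩ := h v
    exact Set.mem_biUnion hu (mem_closedNbhd_comm.1 hvu)
  · refine Set.disjoint_left.2 fun v hvs hvt => hst ?_
    exact (h v).unique ⟨hs, mem_closedNbhd_comm.1 hvs⟩ ⟨ht, mem_closedNbhd_comm.1 hvt⟩

end SimpleGraph

theorem mem_S3_iff (p : ℤ × ℤ) :
    p ∈ S3 ↔ (p.1 + 3 * p.2) % 8 = 0 ∨ (p.1 + 3 * p.2) % 8 = 7 := by
  simp only [S3, L, Set.mem_union, Set.mem_image, Set.mem_ofPred_eq, Int.ModEq, Prod.ext_iff]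
  constructor
  · rintro (h | ⟨q, hq, h1, h2⟩) <;> omega
  · rintro (h | h)
    · left; omega
    · exact Or.inr ⟨(p.1 + 1, p.2), by omega, by simp⟩

theorem mem_closedNbhdT3_iff (u v : ℤ × ℤ) : u ∈ closedNbhdT3 v ↔
    u = v ∨ (u.1 = v.1 ∧ (u.2 = v.2 + 1 ∨ u.2 = v.2 - 1)) ∨
      (u.2 = v.2 ∧ ((Even (v.1 + v.2) ∧ u.1 = v.1 + 1) ∨ (¬Even (v.1 + v.2) ∧ u.1 = v.1 - 1))) := by
  simp only [closedNbhdT3, Set.mem_insert_iff, SimpleGraph.mem_neighborSet, T3, Int.even_iff,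
    Prod.ext_iff]
  omega

theorem existsUnique_mem_S3_mem_closedNbhdT3 (v : ℤ × ℤ) :
    ∃! u, u ∈ S3 ∧ u ∈ closedNbhdT3 v := by
  obtain ⟨x, y⟩ := v
  have hex : (x, y) ∈ S3 ∨ (x, y + 1) ∈ S3 ∨ (x, y - 1) ∈ S3 ∨
      (Even (x + y) ∧ (x + 1, y) ∈ S3) ∨ (¬Even (x + y) ∧ (x - 1, y) ∈ S3) := by
    simp only [mem_S3_iff, Int.even_iff]
    omega
  refine existsUnique_of_exists_of_unique ?_ fun u w ⟨hu, huv⟩ ⟨hw, hwv⟩ => ?_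
  · rcases hex with h | h | h | ⟨he, h⟩ | ⟨ho, h⟩ <;>
      exact ⟨_, h, by simp [mem_closedNbhdT3_iff, *]⟩
  · rw [mem_S3_iff] at hu hw
    rw [mem_closedNbhdT3_iff, Int.even_iff] at huv hwv
    simp only [Prod.ext_iff] at huv hwv ⊢
    omega

/-- `S3` is strongly optimal for `T3`: every vertex has exactly one vertex of
`S3` in its closed neighborhood; consequently the closed neighborhoods `N[s]`, `s ∈ S3`,
partition the vertex set. -/
theorem stmt_9 :
    (∀ v : ℤ × ℤ, ∃! u : ℤ × ℤ, u ∈ S3 ∧ u ∈ closedNbhdT3 v) ∧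
    (⋃ s ∈ S3, closedNbhdT3 s) = Set.univ ∧
    S3.PairwiseDisjoint closedNbhdT3 :=
  ⟨existsUnique_mem_S3_mem_closedNbhdT3,
    SimpleGraph.iUnion_closedNbhd_eq_univ_and_pairwiseDisjoint existsUnique_mem_S3_mem_closedNbhdT3⟩
end

section
/- Let L = {(x,y) ∈ ℤ×ℤ : x ≡ y (mod 4) and x + 3y ≡ 0 (mod 8)}. The set N = {(x, y+1) : (x,y) ∈ L} ∪ {(x−1, y−1) : (x,y) ∈ L}, obtained from S3 = L ∪ {(x−1,y) : (x,y) ∈ L} by moving every guard of L one step up and every guard of {(x−1,y) : (x,y) ∈ L} one step down (each move along an edge of T3), satisfies |N[v] ∩ N| = 1 for every vertex v of the infinite hexagonal grid T3; in particular N is again a strongly optimal dominating set of T3. -/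
/-- The configuration obtained from `S3` by moving every guard of `L` one step up and every
guard of `{(x−1,y) : (x,y) ∈ L}` one step down:
`N = {(x, y+1) : (x,y) ∈ L} ∪ {(x−1, y−1) : (x,y) ∈ L}`. -/
def Nconf : Set (ℤ × ℤ) :=
  (fun p : ℤ × ℤ => (p.1, p.2 + 1)) '' L ∪ (fun p : ℤ × ℤ => (p.1 - 1, p.2 - 1)) '' L

/-! The linear form `κ(x, y) = x + 3y` read mod 8 governs everything: `L` is `κ ≡ 0` (its
condition `x ≡ y mod 4` follows, as `κ ≡ x − y mod 4`), so `Nconf` is `κ ≡ 3` or `κ ≡ 4`.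
A vertical step changes `κ` by `±3`; the horizontal edge at `v` goes right when `κ(v)` is even
and left when it is odd (as `x + y ≡ x + 3y mod 2`), changing `κ` by `+1`, resp. `−1`. Hence
the closed neighbourhood of a vertex with `κ ≡ k` carries the four distinct values
`k, k ± 3, k ± 1` mod 8, exactly one of which is `3` or `4`. -/

def sideNeighbor (v : ℤ × ℤ) : ℤ × ℤ :=
  if Even (v.1 + v.2) then (v.1 + 1, v.2) else (v.1 - 1, v.2)

lemma sideNeighbor_spec (v : ℤ × ℤ) :
    (sideNeighbor v).2 = v.2 ∧
      ((v.1 + v.2) % 2 = 0 ∧ (sideNeighbor v).1 = v.1 + 1 ∨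
        (v.1 + v.2) % 2 = 1 ∧ (sideNeighbor v).1 = v.1 - 1) := by
  unfold sideNeighbor
  split_ifs with h <;> simp only [Int.even_iff] at h <;> dsimp only <;> omega

lemma T3_adj_iff (v u : ℤ × ℤ) :
    T3.Adj v u ↔ u = (v.1, v.2 + 1) ∨ u = (v.1, v.2 - 1) ∨ u = sideNeighbor v := by
  have := sideNeighbor_spec v
  simp only [T3, Prod.ext_iff, Int.even_iff]
  omega

lemma mem_closedNbhd_iff (v u : ℤ × ℤ) :
    u ∈ insert v (T3.neighborSet v) ↔
      u = v ∨ u = (v.1, v.2 + 1) ∨ u = (v.1, v.2 - 1) ∨ u = sideNeighbor v := by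
  rw [Set.mem_insert_iff, SimpleGraph.mem_neighborSet, T3_adj_iff]

lemma mem_L_iff (p : ℤ × ℤ) : p ∈ L ↔ (p.1 + 3 * p.2) % 8 = 0 := by
  simp only [L, Set.mem_ofPred_eq, Int.ModEq]
  omega

lemma mem_Nconf_iff (u : ℤ × ℤ) :
    u ∈ Nconf ↔ (u.1 + 3 * u.2) % 8 = 3 ∨ (u.1 + 3 * u.2) % 8 = 4 := by
  constructor
  · rintro (⟨p, hp, rfl⟩ | ⟨p, hp, rfl⟩) <;> rw [mem_L_iff] at hp <;> dsimp only <;> omega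
  · rintro (h | h)
    · exact Or.inl ⟨(u.1, u.2 - 1), (mem_L_iff _).2 (by omega), by simp⟩
    · exact Or.inr ⟨(u.1 + 1, u.2 + 1), (mem_L_iff _).2 (by omega), by simp⟩

lemma exists_mem_Nconf_closedNbhd (v : ℤ × ℤ) :
    ∃ u ∈ Nconf, u ∈ insert v (T3.neighborSet v) := by
  simp only [mem_closedNbhd_iff, mem_Nconf_iff]
  have hside := sideNeighbor_spec v
  obtain h | h | h | h : ((v.1 + 3 * v.2) % 8 = 3 ∨ (v.1 + 3 * v.2) % 8 = 4) ∨
      ((v.1 + 3 * v.2) % 8 = 0 ∨ (v.1 + 3 * v.2) % 8 = 1) ∨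
      ((v.1 + 3 * v.2) % 8 = 6 ∨ (v.1 + 3 * v.2) % 8 = 7) ∨
      ((v.1 + 3 * v.2) % 8 = 2 ∨ (v.1 + 3 * v.2) % 8 = 5) := by omega
  · exact ⟨v, by omega, Or.inl rfl⟩
  · exact ⟨(v.1, v.2 + 1), by omega, Or.inr (Or.inl rfl)⟩
  · exact ⟨(v.1, v.2 - 1), by omega, Or.inr (Or.inr (Or.inl rfl))⟩
  · exact ⟨sideNeighbor v, by omega, Or.inr (Or.inr (Or.inr rfl))⟩

lemma eq_of_mem_Nconf_closedNbhd {v u w : ℤ × ℤ} (hu : u ∈ Nconf)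
    (hvu : u ∈ insert v (T3.neighborSet v)) (hw : w ∈ Nconf)
    (hvw : w ∈ insert v (T3.neighborSet v)) : u = w := by
  rw [mem_Nconf_iff] at hu hw
  rw [mem_closedNbhd_iff] at hvu hvw
  have hside := sideNeighbor_spec v
  rcases hvu with rfl | rfl | rfl | rfl <;> rcases hvw with rfl | rfl | rfl | rfl <;>
    simp only [Prod.ext_iff] at * <;> omega

lemma existsUnique_mem_Nconf_closedNbhd (v : ℤ × ℤ) :
    ∃! u : ℤ × ℤ, u ∈ Nconf ∧ u ∈ insert v (T3.neighborSet v) := by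
  obtain ⟨u, hu, hvu⟩ := exists_mem_Nconf_closedNbhd v
  exact ⟨u, ⟨hu, hvu⟩, fun w ⟨hw, hvw⟩ => eq_of_mem_Nconf_closedNbhd hw hvw hu hvu⟩

/-- each of the two moves producing `Nconf` from `S3` is along an edge of `T3`,
and `Nconf` satisfies `|N[v] ∩ Nconf| = 1` for every vertex `v`; in particular `Nconf` is again
a strongly optimal dominating set of `T3`. -/
theorem stmt_10 :
    (∀ p ∈ L, T3.Adj p (p.1, p.2 + 1) ∧ T3.Adj (p.1 - 1, p.2) (p.1 - 1, p.2 - 1)) ∧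
    (∀ v : ℤ × ℤ, ∃! u : ℤ × ℤ, u ∈ Nconf ∧ u ∈ insert v (T3.neighborSet v)) ∧
    (∀ v : ℤ × ℤ, v ∉ Nconf → ∃ u ∈ Nconf, T3.Adj v u) := by
  refine ⟨fun p _ => ⟨(T3_adj_iff _ _).2 (Or.inl rfl), (T3_adj_iff _ _).2 (Or.inr (Or.inl rfl))⟩,
    existsUnique_mem_Nconf_closedNbhd, fun v hv => ?_⟩
  obtain ⟨u, hu, hvu⟩ := exists_mem_Nconf_closedNbhd v
  rcases Set.mem_insert_iff.1 hvu with rfl | hadj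
  · exact absurd hu hv
  · exact ⟨u, hu, hadj⟩
end
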